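/- If the rooted tree (T', R') is obtained from a balanced rooted tree (T, R) with a unrooted vertices and b edges by attaching one new rooted leaf to every unrooted vertex of T, then (T', R') is balanced and has a unrooted vertices and b + a edges. -/

import Mathlib

/-- `eCount G S` is the number of edges of `G` with at least one endpoint in `S`. -/
noncomputable def eCount {V : Type} (G : SimpleGraph V) (S : Set V) : ℕ :=
  {e ∈ G.edgeSet | ∃ v ∈ S, v ∈ e}.ncard

/-- The graph obtained from `T` by attaching one new (rooted) leaf to every vertex
outside the root set `R`. -/
def attachLeaves {α : Type} (T : SimpleGraph α) (R : Finset α) :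
    SimpleGraph (α ⊕ {v : α // v ∉ R}) :=
  SimpleGraph.fromRel (fun x y =>
    match x, y with
    | Sum.inl u, Sum.inl v => T.Adj u v
    | Sum.inl u, Sum.inr w => u = (w : α)
    | _, _ => False)

/-! Attaching leaves keeps the edges of `T` and adds one pendant edge at each unrooted
vertex, so a set `S` of unrooted vertices gains exactly `|S|` incident edges:
`e'(S) = e(S) + |S| ≥ (b / a) |S| + (a / a) |S| = ((b + a) / a) |S|`, where `a / a ≤ 1`
also holds for `a = 0` because division by zero gives `0`. -/

namespace Sym2

theorem sep_image_map_eq_image_map_sep {α β : Type} {f : α → β}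
    (hf : Function.Injective f) (E : Set (Sym2 α)) (S : Set α) :
    {e ∈ Sym2.map f '' E | ∃ v ∈ f '' S, v ∈ e} =
      Sym2.map f '' {e ∈ E | ∃ v ∈ S, v ∈ e} := by
  ext e
  constructor
  · rintro ⟨⟨e, he, rfl⟩, _, ⟨v, hv, rfl⟩, hve⟩
    obtain ⟨v', hv'e, hv'⟩ := Sym2.mem_map.mp hve
    exact ⟨e, ⟨he, v, hv, hf hv' ▸ hv'e⟩, rfl⟩
  · rintro ⟨e, ⟨he, v, hv, hve⟩, rfl⟩
    exact ⟨⟨e, he, rfl⟩, f v, ⟨v, hv, rfl⟩, Sym2.mem_map.mpr ⟨v, hve, rfl⟩⟩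

theorem map_inl_ne_of_inr_mem {α β : Type} {w : β} {z : Sym2 (α ⊕ β)} (hz : Sum.inr w ∈ z)
    (e : Sym2 α) : Sym2.map Sum.inl e ≠ z := by
  rintro rfl
  obtain ⟨u, -, hu⟩ := Sym2.mem_map.mp hz
  exact Sum.inl_ne_inr hu

end Sym2

namespace attachLeaves

variable {α : Type} (T : SimpleGraph α) (R : Finset α)

def pendantEdge (w : {v : α // v ∉ R}) : Sym2 (α ⊕ {v : α // v ∉ R}) :=
  s(Sum.inl (w : α), Sum.inr w)

theorem pendantEdge_injective : Function.Injective (pendantEdge R) := by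
  intro w w' h
  simp only [pendantEdge, Sym2.eq_iff, Sum.inl.injEq, Sum.inr.injEq] at h
  grind

theorem disjoint_image_map_inl_range_pendantEdge (E : Set (Sym2 α)) :
    Disjoint (Sym2.map Sum.inl '' E) (Set.range (pendantEdge R)) := by
  rw [Set.disjoint_left]
  rintro _ ⟨e, -, rfl⟩ ⟨w, hw⟩
  exact Sym2.map_inl_ne_of_inr_mem (Sym2.mem_mk_right _ _) e hw.symm

theorem edgeSet_eq :
    (attachLeaves T R).edgeSet = Sym2.map Sum.inl '' T.edgeSet ∪ Set.range (pendantEdge R) := by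
  ext e
  induction e using Sym2.ind with
  | _ x y =>
    rcases x with u | w <;> rcases y with v | w'
    · rw [← Sym2.map_mk, Set.mem_union, (Sym2.map.injective Sum.inl_injective).mem_set_image]
      simpa [attachLeaves, pendantEdge, T.adj_comm v u] using T.ne_of_adj
    · simp [attachLeaves, pendantEdge, Sym2.map_inl_ne_of_inr_mem (Sym2.mem_mk_right _ _), eq_comm]
    · simp [attachLeaves, pendantEdge, Sym2.map_inl_ne_of_inr_mem (Sym2.mem_mk_left _ _), eq_comm]
    · simp [attachLeaves, pendantEdge, Sym2.map_inl_ne_of_inr_mem (Sym2.mem_mk_left _ _)]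

theorem sep_range_pendantEdge (S : Set α) :
    {e ∈ Set.range (pendantEdge R) | ∃ v ∈ Sum.inl '' S, v ∈ e} =
      pendantEdge R '' (Subtype.val ⁻¹' S) := by
  ext e
  constructor
  · rintro ⟨⟨w, rfl⟩, _, ⟨v, hv, rfl⟩, hvw⟩
    refine ⟨w, ?_, rfl⟩
    simp only [pendantEdge, Sym2.mem_iff, Sum.inl.injEq, reduceCtorEq, or_false] at hvw
    rwa [Set.mem_preimage, ← hvw]
  · rintro ⟨w, hw, rfl⟩
    exact ⟨⟨w, rfl⟩, Sum.inl w, ⟨w, hw, rfl⟩, Sym2.mem_mk_left _ _⟩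

theorem eCount_image_inl [Finite α] {S : Set α} (hS : S ⊆ {v | v ∉ R}) :
    eCount (attachLeaves T R) (Sum.inl '' S) = eCount T S + S.ncard := by
  rw [eCount, edgeSet_eq]
  simp only [Set.mem_union]
  rw [Set.sep_union, Sym2.sep_image_map_eq_image_map_sep Sum.inl_injective,
    sep_range_pendantEdge, Set.ncard_union_eq
      ((disjoint_image_map_inl_range_pendantEdge R _).mono_right (Set.image_subset_range _ _)),
    Set.ncard_image_of_injective _ (Sym2.map.injective Sum.inl_injective),
    Set.ncard_image_of_injective _ (pendantEdge_injective R),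
    Set.ncard_preimage_of_injective_subset_range Subtype.val_injective (by simpa using hS), eCount]

theorem ncard_edgeSet [Finite α] :
    (attachLeaves T R).edgeSet.ncard = T.edgeSet.ncard + Nat.card {v : α // v ∉ R} := by
  rw [edgeSet_eq, Set.ncard_union_eq (disjoint_image_map_inl_range_pendantEdge R _),
    Set.ncard_image_of_injective _ (Sym2.map.injective Sum.inl_injective),
    Set.ncard_range_of_injective (pendantEdge_injective R)]

end attachLeaves

theorem stmt_8_general {α : Type} [Fintype α] [DecidableEq α]
    (T : SimpleGraph α)
    (R : Finset α)
    (a b : ℕ) (ha : a = Fintype.card α - R.card) (hb : b = T.edgeSet.ncard)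
    (hBal : ∀ S : Set α, S ⊆ {v | v ∉ R} →
      (eCount T S : ℝ) ≥ ((b : ℝ) / (a : ℝ)) * S.ncard) :
    (Sum.inl '' {v : α | v ∉ R} : Set (α ⊕ {v : α // v ∉ R})).ncard = a ∧
    (attachLeaves T R).edgeSet.ncard = b + a ∧
    ∀ S : Set (α ⊕ {v : α // v ∉ R}), S ⊆ Sum.inl '' {v : α | v ∉ R} →
      (eCount (attachLeaves T R) S : ℝ) ≥ (((b : ℝ) + a) / (a : ℝ)) * S.ncard := by
  have hunrooted : Nat.card {v : α // v ∉ R} = a := by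
    rw [Nat.card_eq_fintype_card, Fintype.card_subtype_compl, Fintype.card_coe, ha]
  refine ⟨?_, ?_, ?_⟩
  · rw [Set.ncard_image_of_injective _ Sum.inl_injective, ← Nat.card_coe_set_eq]
    exact hunrooted
  · rw [attachLeaves.ncard_edgeSet, hunrooted, hb]
  · intro S hS
    obtain ⟨S, hSR, rfl⟩ := Set.subset_image_iff.mp hS
    rw [attachLeaves.eCount_image_inl T R hSR, Set.ncard_image_of_injective _ Sum.inl_injective]
    push_cast
    calc ((b + a) / a : ℝ) * S.ncard = b / a * S.ncard + a / a * S.ncard := by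
          rw [add_div, add_mul]
      _ ≤ eCount T S + S.ncard :=
          add_le_add (hBal S hSR) (mul_le_of_le_one_left (Nat.cast_nonneg _) (div_self_le_one _))

/-- If `(T', R')` is obtained from a balanced rooted tree `(T, R)` with `a` unrooted
vertices and `b` edges by attaching a new rooted leaf to every unrooted vertex, then
`T'` has `a` unrooted vertices and `b + a` edges and is again balanced (now with
density `(b+a)/a`). -/
theorem stmt_8 {α : Type} [Fintype α] [DecidableEq α]
    (T : SimpleGraph α) (hT : T.IsTree)
    (R : Finset α) (hRind : ∀ u ∈ R, ∀ v ∈ R, ¬ T.Adj u v)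
    (a b : ℕ) (ha : a = Fintype.card α - R.card) (hb : b = T.edgeSet.ncard)
    (hBal : ∀ S : Set α, S ⊆ {v | v ∉ R} →
      (eCount T S : ℝ) ≥ ((b : ℝ) / (a : ℝ)) * S.ncard) :
    (Sum.inl '' {v : α | v ∉ R} : Set (α ⊕ {v : α // v ∉ R})).ncard = a ∧
    (attachLeaves T R).edgeSet.ncard = b + a ∧
    ∀ S : Set (α ⊕ {v : α // v ∉ R}), S ⊆ Sum.inl '' {v : α | v ∉ R} →
      (eCount (attachLeaves T R) S : ℝ) ≥ (((b : ℝ) + a) / (a : ℝ)) * S.ncard :=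
  stmt_8_general T R a b ha hb hBal
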